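/- arXiv:1906.00796 — 2 statements merged into one kernel-verified Lean document; each statement's English description precedes it below -/
import Mathlib

section
/- With the construction as in the context: if H is not nilpotent, then the topological entropy of 𝓕 is strictly larger than the topological entropy of 𝓖: h(𝓕) > h(𝓖). -/
open Filter Topology

/-- `spaceTimePatterns F n t` is `R_F(n,t)`: the set of patterns on `[0,n) × [0,t)`
appearing in space-time diagrams of `F`, i.e. patterns `p` with `p(j,i) = F^i(c)_j`. -/
def spaceTimePatterns {C : Type*} (F : (ℕ → C) → (ℕ → C)) (n t : ℕ) :
    Set (Fin n → Fin t → C) :=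
  { p | ∃ c : ℕ → C, ∀ (j : Fin n) (i : Fin t), p j i = F^[(i : ℕ)] c (j : ℕ) }

/-- The topological entropy of a one-sided cellular automaton `F`:
`h(F) = lim_{n→∞} lim_{t→∞} (1/t)·log₂ |R_F(n,t)|` (both limits exist). -/
noncomputable def caEntropy {C : Type*} (F : (ℕ → C) → (ℕ → C)) : ℝ :=
  limUnder atTop fun n : ℕ =>
    limUnder atTop fun t : ℕ =>
      (1 / (t : ℝ)) * Real.logb 2 ((spaceTimePatterns F n t).ncard)

/-- The permutations `ρ_a` of `{0,1,2}`: `ρ_0 = ρ_2 = (1 2)` and `ρ_1 = (0 1 2)`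
(i.e. `0↦1, 1↦2, 2↦0`).  `rho a x = ρ_a(x)`. -/
def rho (a x : Fin 3) : Fin 3 :=
  if a = 1 then ![1, 2, 0] x else ![0, 2, 1] x

/-- The `2k`-fold direct product `zot_{2k}` of the cellular automaton `zot` acting
coordinatewise on `A^ℕ` with `A = {0,1,2}^{2k}`. -/
def zot2k (k : ℕ) (c : ℕ → (Fin (2 * k) → Fin 3)) : ℕ → (Fin (2 * k) → Fin 3) :=
  fun i j => rho (c (i + 1) j) (c i j)

/-- The cellular automaton `𝓖 = id_A × H` on `(A × B)^ℕ` with `A = {0,1,2}^{2k}`. -/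
def calG {B : Type*} (k : ℕ) (H : (ℕ → B) → (ℕ → B))
    (ce : ℕ → (Fin (2 * k) → Fin 3) × B) : ℕ → (Fin (2 * k) → Fin 3) × B :=
  fun i => ((ce i).1, H (fun m => (ce m).2) i)

/-- The cellular automaton `𝓕` on `(A × B)^ℕ` with `A = {0,1,2}^{2k}`: it acts as `H` on
the `B`-track, and on the `A`-track it acts as `zot_{2k}` where the `B`-track is not
going to become `q`, and as the identity where it is. -/
def calF {B : Type*} [DecidableEq B] (k : ℕ) (H : (ℕ → B) → (ℕ → B)) (q : B)
    (ce : ℕ → (Fin (2 * k) → Fin 3) × B) : ℕ → (Fin (2 * k) → Fin 3) × B :=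
  fun i =>
    (if H (fun m => (ce m).2) i = q then (ce i).1
      else zot2k k (fun m => (ce m).1) i,
     H (fun m => (ce m).2) i)

/-!
For a radius-one automaton, `h(F)` is the supremum over `n` of the growth rate in `t` of
`|R_F(n,t)|`, which exists by subadditivity. A pattern of `𝓖 = id × H` of size `n × t` is
determined by `n` symbols of `A` and `n + t` symbols of `B`, so `h(𝓖) ≤ log₂ |B|`. Since `H` is
not nilpotent and `q` is spreading, compactness of `B^ℕ` yields a configuration `e` whose
`H`-orbit never contains `q`. Above `e`, `𝓕` applies `zot_{2k}` everywhere, and the column of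
cell `0` of `zot` during `2m` steps recovers `m` freely chosen bits on each of the `2k` tracks:
this gives `2^{2km}` patterns of size `1 × 2m`, hence `h(𝓕) ≥ k > log₂ |B|`.
-/

section SpaceTimePatterns

variable {C : Type*} (F : (ℕ → C) → (ℕ → C))

lemma ncard_spaceTimePatterns_pos [Finite C] [Nonempty C] (n t : ℕ) :
    0 < (spaceTimePatterns F n t).ncard :=
  (Set.ncard_pos (Set.toFinite _)).2 ⟨_, Classical.arbitrary (ℕ → C), fun _ _ => rfl⟩

lemma ncard_spaceTimePatterns_le_of_determined {X : Type*} [Finite X] {n t : ℕ}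
    (φ : (ℕ → C) → X)
    (hφ : ∀ c c', φ c = φ c' → ∀ (j : Fin n) (i : Fin t), F^[i] c j = F^[i] c' j) :
    (spaceTimePatterns F n t).ncard ≤ Nat.card X := by
  let pattern : Set.range φ → spaceTimePatterns F n t := fun x =>
    ⟨fun j i => F^[i] x.2.choose j, x.2.choose, fun _ _ => rfl⟩
  have hsurj : Function.Surjective pattern := by
    rintro ⟨p, c, hc⟩
    refine ⟨⟨φ c, Set.mem_range_self c⟩, Subtype.ext (funext fun j => funext fun i => ?_)⟩
    show F^[i] _ j = p j i
    rw [hc]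
    exact hφ _ _ (Set.mem_range_self (f := φ) c).choose_spec j i
  calc (spaceTimePatterns F n t).ncard = Nat.card (spaceTimePatterns F n t) :=
        (Nat.card_coe_set_eq _).symm
    _ ≤ Nat.card (Set.range φ) := Nat.card_le_card_of_surjective pattern hsurj
    _ ≤ Nat.card X := Finite.card_subtype_le _

variable [Finite C]

lemma ncard_spaceTimePatterns_add_le (n a b : ℕ) :
    (spaceTimePatterns F n (a + b)).ncard ≤
      (spaceTimePatterns F n a).ncard * (spaceTimePatterns F n b).ncard := by
  have key := ncard_spaceTimePatterns_le_of_determined F (n := n) (t := a + b)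
    (fun c => (⟨_, c, fun _ _ => rfl⟩, ⟨_, F^[a] c, fun _ _ => rfl⟩) :
      (ℕ → C) → spaceTimePatterns F n a × spaceTimePatterns F n b) ?_
  · rwa [Nat.card_prod, Nat.card_coe_set_eq, Nat.card_coe_set_eq] at key
  intro c c' h j i
  refine Fin.addCases (fun i => ?_) (fun i => ?_) i
  · exact congrFun (congrFun (congrArg (fun x => x.1.1) h) j) i
  · simpa only [Fin.val_natAdd, add_comm a, Function.iterate_add_apply] using
      congrFun (congrFun (congrArg (fun x => x.2.1) h) j) i

lemma ncard_spaceTimePatterns_mono {n n' : ℕ} (h : n ≤ n') (t : ℕ) :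
    (spaceTimePatterns F n t).ncard ≤ (spaceTimePatterns F n' t).ncard := by
  rw [← Nat.card_coe_set_eq (spaceTimePatterns F n' t)]
  refine ncard_spaceTimePatterns_le_of_determined F
    (fun c => (⟨_, c, fun _ _ => rfl⟩ : spaceTimePatterns F n' t)) ?_
  intro c c' hcc' j i
  exact congrFun (congrFun (congrArg Subtype.val hcc') (Fin.castLE h j)) i

end SpaceTimePatterns

/-- Written exactly as the inner limit in `caEntropy`, so that
`caEntropy F = limUnder atTop (rowEntropy F)` holds by definition. -/
noncomputable def rowEntropy {C : Type*} (F : (ℕ → C) → (ℕ → C)) (n : ℕ) : ℝ :=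
  limUnder atTop fun t : ℕ => (1 / (t : ℝ)) * Real.logb 2 ((spaceTimePatterns F n t).ncard)

section RowEntropy

variable {C : Type*} [Finite C] [Nonempty C] (F : (ℕ → C) → (ℕ → C))

lemma subadditive_logb_ncard_spaceTimePatterns (n : ℕ) :
    Subadditive fun t => Real.logb 2 ((spaceTimePatterns F n t).ncard) := by
  intro a b
  have hpos := ncard_spaceTimePatterns_pos F n
  rw [← Real.logb_mul (by exact_mod_cast (hpos a).ne') (by exact_mod_cast (hpos b).ne')]
  exact Real.logb_le_logb_of_le one_lt_two (by exact_mod_cast hpos _)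
    (by exact_mod_cast ncard_spaceTimePatterns_add_le F n a b)

lemma tendsto_rowEntropy (n : ℕ) :
    Tendsto (fun t : ℕ => Real.logb 2 ((spaceTimePatterns F n t).ncard) / t) atTop
      (𝓝 (rowEntropy F n)) := by
  have hbdd : BddBelow (Set.range fun t : ℕ =>
      Real.logb 2 ((spaceTimePatterns F n t).ncard) / t) := by
    refine ⟨0, ?_⟩
    rintro _ ⟨t, rfl⟩
    exact div_nonneg (Real.logb_nonneg one_lt_two
      (by exact_mod_cast ncard_spaceTimePatterns_pos F n t)) t.cast_nonneg
  have h := (subadditive_logb_ncard_spaceTimePatterns F n).tendsto_lim hbdd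
  unfold rowEntropy
  simp_rw [one_div_mul_eq_div]
  rwa [h.limUnder_eq]

lemma rowEntropy_mono : Monotone (rowEntropy F) := by
  refine monotone_nat_of_le_succ fun n => le_of_tendsto_of_tendsto'
    (tendsto_rowEntropy F n) (tendsto_rowEntropy F (n + 1)) fun t => ?_
  refine div_le_div_of_nonneg_right ?_ t.cast_nonneg
  exact Real.logb_le_logb_of_le one_lt_two (by exact_mod_cast ncard_spaceTimePatterns_pos F n t)
    (by exact_mod_cast ncard_spaceTimePatterns_mono F n.le_succ t)

lemma rowEntropy_le_logb {n a b : ℕ} (ha : 0 < a) (hb : 0 < b)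
    (h : ∀ t, (spaceTimePatterns F n t).ncard ≤ a * b ^ t) :
    rowEntropy F n ≤ Real.logb 2 b := by
  have hlim : Tendsto (fun t : ℕ => Real.logb 2 a / t + Real.logb 2 b) atTop
      (𝓝 (Real.logb 2 b)) := by
    simpa using (tendsto_const_div_atTop_nhds_zero_nat _).add_const (Real.logb 2 b)
  refine le_of_tendsto_of_tendsto (tendsto_rowEntropy F n) hlim ?_
  filter_upwards [eventually_gt_atTop 0] with t ht
  have ht' : (0 : ℝ) < t := by exact_mod_cast ht
  rw [div_add' _ _ _ ht'.ne', div_le_div_iff_of_pos_right ht']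
  calc Real.logb 2 ((spaceTimePatterns F n t).ncard)
      ≤ Real.logb 2 ((a : ℝ) * (b : ℝ) ^ t) :=
        Real.logb_le_logb_of_le one_lt_two
          (by exact_mod_cast ncard_spaceTimePatterns_pos F n t) (by exact_mod_cast h t)
    _ = Real.logb 2 a + Real.logb 2 b * t := by
        rw [Real.logb_mul (by positivity) (by positivity), Real.logb_pow, mul_comm]

lemma le_rowEntropy {n p b : ℕ} (hp : 0 < p) (hb : 0 < b)
    (h : ∀ m, b ^ m ≤ (spaceTimePatterns F n (p * m)).ncard) :
    Real.logb 2 b / p ≤ rowEntropy F n := by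
  have hsub := (tendsto_rowEntropy F n).comp
    (tendsto_atTop_mono (fun m => Nat.le_mul_of_pos_left m hp) tendsto_id)
  refine ge_of_tendsto hsub ?_
  filter_upwards [eventually_gt_atTop 0] with m hm
  have hpm : (0 : ℝ) < p * m := by positivity
  simp only [Function.comp_apply, Nat.cast_mul]
  rw [le_div_iff₀ hpm]
  calc Real.logb 2 b / p * (p * m) = Real.logb 2 ((b : ℝ) ^ m) := by
        rw [Real.logb_pow]; field_simp
    _ ≤ Real.logb 2 ((spaceTimePatterns F n (p * m)).ncard) :=
        Real.logb_le_logb_of_le one_lt_two (by positivity) (by exact_mod_cast h m)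

end RowEntropy

def IsRadiusOne {C : Type*} (F : (ℕ → C) → (ℕ → C)) : Prop :=
  ∀ c c' j, c j = c' j → c (j + 1) = c' (j + 1) → F c j = F c' j

namespace IsRadiusOne

variable {C : Type*} {F : (ℕ → C) → (ℕ → C)}

lemma iterate_apply_eq (hF : IsRadiusOne F) (t : ℕ) {c c' : ℕ → C} {j : ℕ}
    (h : ∀ l, j ≤ l → l ≤ j + t → c l = c' l) : F^[t] c j = F^[t] c' j := by
  induction t generalizing c c' with
  | zero => exact h j le_rfl le_rfl
  | succ t ih =>
    refine ih fun l hjl hlt => hF c c' l (h l hjl (by omega)) (h (l + 1) (by omega) (by omega))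

lemma ncard_spaceTimePatterns_le [Finite C] (hF : IsRadiusOne F) (n t : ℕ) :
    (spaceTimePatterns F n t).ncard ≤ Nat.card C ^ n * Nat.card C ^ t := by
  have key := ncard_spaceTimePatterns_le_of_determined F (n := n) (t := t)
    (fun c (l : Fin (n + t)) => c l) fun c c' h j i =>
      hF.iterate_apply_eq i fun l _ hl => congrFun h ⟨l, by omega⟩
  rwa [Nat.card_fun, Nat.card_fin, pow_add] at key

variable [Finite C] [Nonempty C]

lemma bddAbove_range_rowEntropy (hF : IsRadiusOne F) : BddAbove (Set.range (rowEntropy F)) :=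
  ⟨_, Set.forall_mem_range.2 fun n =>
    rowEntropy_le_logb F (pow_pos Nat.card_pos n) Nat.card_pos (hF.ncard_spaceTimePatterns_le n)⟩

lemma caEntropy_eq_iSup (hF : IsRadiusOne F) : caEntropy F = ⨆ n, rowEntropy F n :=
  (tendsto_atTop_ciSup (rowEntropy_mono F) hF.bddAbove_range_rowEntropy).limUnder_eq

end IsRadiusOne

def zot (c : ℕ → Fin 3) : ℕ → Fin 3 := fun i => rho (c (i + 1)) (c i)

/- Bits `d` are written at the even cells of `zotEncode d`. Cell `(t, i)` of its space-time
diagram holds `0` or `1` when `t + i` is even and `0` or `2` when `t + i` is odd; reading a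
nonzero value as `true`, `zot` acts on it as the XOR rule `xorDiagram`, and the bit `d l`
reaches the column of cell `0` at time `2 l`. -/
def zotSymbol (s : ℕ) (b : Bool) : Fin 3 := if b then (if s % 2 = 0 then 1 else 2) else 0

def xorDiagram (d : ℕ → Bool) : ℕ → ℕ → Bool
  | 0, i => if i % 2 = 0 then d (i / 2) else false
  | t + 1, i =>
    if (t + 1 + i) % 2 = 0 then xor (xorDiagram d t i) (xorDiagram d t (i + 1))
    else xorDiagram d t i

def zotEncode (d : ℕ → Bool) : ℕ → Fin 3 := fun i => zotSymbol i (xorDiagram d 0 i)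

lemma zotSymbol_injective (s : ℕ) : Function.Injective (zotSymbol s) := by
  intro a b h
  rcases Nat.mod_two_eq_zero_or_one s with hs | hs <;>
    cases a <;> cases b <;> simp_all [zotSymbol]

lemma iterate_zot_zotEncode (d : ℕ → Bool) (t i : ℕ) :
    zot^[t] (zotEncode d) i = zotSymbol (t + i) (xorDiagram d t i) := by
  induction t generalizing i with
  | zero => simp [zotEncode]
  | succ t ih =>
    rw [Function.iterate_succ_apply']
    show rho (zot^[t] (zotEncode d) (i + 1)) (zot^[t] (zotEncode d) i) = _
    rw [ih (i + 1), ih i]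
    rcases Nat.mod_two_eq_zero_or_one (t + i) with h | h
    · have h1 : (t + (i + 1)) % 2 = 1 := by omega
      have h2 : (t + 1 + i) % 2 = 1 := by omega
      simp only [xorDiagram, h2]
      cases xorDiagram d t i <;> cases xorDiagram d t (i + 1) <;>
        simp [zotSymbol, h, h1, h2] <;> rfl
    · have h1 : (t + (i + 1)) % 2 = 0 := by omega
      have h2 : (t + 1 + i) % 2 = 0 := by omega
      simp only [xorDiagram, h2]
      cases xorDiagram d t i <;> cases xorDiagram d t (i + 1) <;>
        simp [zotSymbol, h, h1, h2] <;> rfl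

/-- The XOR rule has speed one: a difference of `d` and `d'` at cell `(t, i)` comes from the
initial cell `i + t` only. -/
lemma xor_xorDiagram_eq {d d' : ℕ → Bool} (t i : ℕ)
    (h : ∀ j, i ≤ j → j < i + t → xorDiagram d 0 j = xorDiagram d' 0 j) :
    xor (xorDiagram d t i) (xorDiagram d' t i) =
      if (t + i) % 2 = 0 then xor (xorDiagram d 0 (i + t)) (xorDiagram d' 0 (i + t))
      else false := by
  induction t generalizing i with
  | zero =>
    rcases Nat.mod_two_eq_zero_or_one i with hi | hi <;> simp [xorDiagram, hi]
  | succ t ih =>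
    have hi := ih i fun j hj hjt => h j hj (by omega)
    by_cases hpar : (t + 1 + i) % 2 = 0
    · have hi1 := ih (i + 1) fun j hj hjt => h j (by omega) (by omega)
      rw [if_neg (by omega)] at hi
      rw [if_pos (by omega), show i + 1 + t = i + (t + 1) by omega] at hi1
      simp only [xorDiagram.eq_2, hpar, if_true]
      rw [Bool.xor_assoc, Bool.xor_left_comm (xorDiagram d t (i + 1)), ← Bool.xor_assoc, hi, hi1,
        Bool.false_xor]
    · rw [if_pos (by omega), h (i + t) (by omega) (by omega), Bool.xor_self] at hi
      simpa [xorDiagram, hpar] using hi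

lemma eq_of_iterate_zot_zotEncode_eq {d d' : ℕ → Bool} {m : ℕ}
    (hcol : ∀ t < 2 * m, zot^[t] (zotEncode d) 0 = zot^[t] (zotEncode d') 0) :
    ∀ l < m, d l = d' l := by
  intro l hl
  induction l using Nat.strong_induction_on with
  | _ l ih =>
  have hinit : ∀ j, 0 ≤ j → j < 0 + 2 * l → xorDiagram d 0 j = xorDiagram d' 0 j := by
    intro j _ hj
    rcases Nat.mod_two_eq_zero_or_one j with hj2 | hj2
    · simp [xorDiagram, hj2, ih (j / 2) (by omega) (by omega)]
    · simp [xorDiagram, hj2]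
  have hcol_l := hcol (2 * l) (by omega)
  rw [iterate_zot_zotEncode, iterate_zot_zotEncode] at hcol_l
  have hdiff := xor_xorDiagram_eq (2 * l) 0 hinit
  rw [zotSymbol_injective _ hcol_l, Bool.xor_self, if_pos (by omega)] at hdiff
  simpa [xorDiagram] using hdiff

section SpreadingState

variable {B : Type*} {H : (ℕ → B) → (ℕ → B)} {f : B → B → B}

lemma isRadiusOne_of_local (hf : ∀ c i, H c i = f (c i) (c (i + 1))) : IsRadiusOne H := by
  intro c c' j h h'
  rw [hf, hf, h, h']

lemma iterate_comp_shift (hf : ∀ c i, H c i = f (c i) (c (i + 1))) (n : ℕ) (c : ℕ → B)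
    (j : ℕ) : H^[n] (fun m => c (m + j)) = fun i => H^[n] c (i + j) := by
  induction n with
  | zero => rfl
  | succ n ih =>
    funext i
    rw [Function.iterate_succ_apply', Function.iterate_succ_apply', ih, hf, hf,
      add_right_comm]

variable {q : B}

lemma iterate_apply_eq_of_spreading (hf : ∀ c i, H c i = f (c i) (c (i + 1)))
    (hq : ∀ a b : B, a = q ∨ b = q → f a b = q) {c : ℕ → B} {n j : ℕ} (h : H^[n] c j = q)
    (m : ℕ) {i : ℕ} (hij : i ≤ j) (hji : j ≤ i + m) : H^[n + m] c i = q := by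
  induction m generalizing i with
  | zero => rwa [show i = j by omega]
  | succ m ih =>
    rw [← add_assoc, Function.iterate_succ_apply', hf]
    apply hq
    by_cases hjm : j ≤ i + m
    · exact Or.inl (ih hij hjm)
    · exact Or.inr (ih (by omega) (by omega))

lemma exists_forall_iterate_ne_of_not_nilpotent [Finite B]
    (hf : ∀ c i, H c i = f (c i) (c (i + 1))) (hq : ∀ a b : B, a = q ∨ b = q → f a b = q)
    (hnotnil : ¬ ∃ q' : B, (H (fun _ => q') = fun _ => q') ∧
        ∀ c, ∃ n : ℕ, H^[n] c = fun _ => q') :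
    ∃ e : ℕ → B, ∀ n j, H^[n] e j ≠ q := by
  by_contra! hreach
  let _ : TopologicalSpace B := ⊥
  have _ : DiscreteTopology B := ⟨rfl⟩
  have hcont : Continuous H := by
    rw [show H = fun c i => f (c i) (c (i + 1)) from funext fun c => funext (hf c)]
    have hrule : Continuous fun p : B × B => f p.1 p.2 := continuous_of_discreteTopology
    exact continuous_pi fun i =>
      hrule.comp ((continuous_apply i).prodMk (continuous_apply (i + 1)) :
        Continuous fun c : ℕ → B => (c i, c (i + 1)))
  -- Compactness of `B^ℕ` bounds the time it takes `q` to reach cell `0`.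
  obtain ⟨s, hs⟩ := isCompact_univ.elim_finite_subcover (fun N => {e | H^[N] e 0 = q})
    (fun N => (isOpen_discrete {q}).preimage ((continuous_apply 0).comp (hcont.iterate N)))
    fun e _ => by
      obtain ⟨n, j, h⟩ := hreach e
      exact Set.mem_iUnion.2 ⟨n + j, iterate_apply_eq_of_spreading hf hq h j j.zero_le (by omega)⟩
  have hN : ∀ e, H^[s.sup id] e 0 = q := by
    intro e
    obtain ⟨N, hNs, he⟩ := Set.mem_iUnion₂.1 (hs (Set.mem_univ e))
    have := iterate_apply_eq_of_spreading hf hq he (s.sup id - N) le_rfl (Nat.zero_le _)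
    rwa [Nat.add_sub_cancel' (show N ≤ s.sup id from Finset.le_sup (f := id) hNs)] at this
  refine hnotnil ⟨q, funext fun i => by rw [hf]; exact hq _ _ (Or.inl rfl),
    fun c => ⟨s.sup id, funext fun j => ?_⟩⟩
  have := hN fun m => c (m + j)
  rw [iterate_comp_shift hf] at this
  simpa using this

end SpreadingState

section Construction

variable {B : Type*} (k : ℕ) {H : (ℕ → B) → (ℕ → B)}

lemma iterate_zot2k_apply (t : ℕ) (c : ℕ → Fin (2 * k) → Fin 3) (i : ℕ) (j : Fin (2 * k)) :
    (zot2k k)^[t] c i j = zot^[t] (fun m => c m j) i := by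
  induction t generalizing c with
  | zero => rfl
  | succ t ih => exact ih (zot2k k c)

lemma iterate_calG_apply (s : ℕ) (ce : ℕ → (Fin (2 * k) → Fin 3) × B) (i : ℕ) :
    (calG k H)^[s] ce i = ((ce i).1, H^[s] (fun m => (ce m).2) i) := by
  induction s generalizing ce with
  | zero => rfl
  | succ s ih => exact ih (calG k H ce)

lemma iterate_calF_of_forall_ne [DecidableEq B] {q : B} {e : ℕ → B}
    (he : ∀ s i, H^[s] e i ≠ q) (s : ℕ) (c : ℕ → Fin (2 * k) → Fin 3) :
    (calF k H q)^[s] (fun m => (c m, e m)) = fun i => ((zot2k k)^[s] c i, H^[s] e i) := by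
  induction s with
  | zero => rfl
  | succ s ih =>
    funext i
    rw [Function.iterate_succ_apply', ih]
    simp only [calF, ← Function.iterate_succ_apply' H, if_neg (he (s + 1) i),
      ← Function.iterate_succ_apply' (zot2k k)]

lemma isRadiusOne_calG (hH : IsRadiusOne H) : IsRadiusOne (calG k H) := by
  intro c c' j h h'
  simp only [calG, h, hH (fun m => (c m).2) (fun m => (c' m).2) j (congrArg Prod.snd h)
    (congrArg Prod.snd h')]

lemma isRadiusOne_calF [DecidableEq B] (hH : IsRadiusOne H) (q : B) :
    IsRadiusOne (calF k H q) := by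
  intro c c' j h h'
  have hzot : zot2k k (fun m => (c m).1) j = zot2k k (fun m => (c' m).1) j := by
    unfold zot2k
    simp only [h, h']
  simp only [calF, h, hzot, hH (fun m => (c m).2) (fun m => (c' m).2) j (congrArg Prod.snd h)
    (congrArg Prod.snd h')]

lemma ncard_spaceTimePatterns_calG_le [Finite B] (hH : IsRadiusOne H) (n t : ℕ) :
    (spaceTimePatterns (calG k H) n t).ncard ≤
      ((3 ^ (2 * k)) ^ n * Nat.card B ^ n) * Nat.card B ^ t := by
  have key := ncard_spaceTimePatterns_le_of_determined (calG k H) (n := n) (t := t)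
    (fun ce => (fun (j : Fin n) => (ce j).1, fun (l : Fin (n + t)) => (ce l).2))
    fun ce ce' h j i => by
      rw [iterate_calG_apply, iterate_calG_apply]
      exact Prod.ext (congrFun (congrArg Prod.fst h) j)
        (hH.iterate_apply_eq i fun l _ hl => congrFun (congrArg Prod.snd h) ⟨l, by omega⟩)
  simpa [Nat.card_fun, pow_add, mul_assoc] using key

lemma caEntropy_calG_le [Finite B] [Nonempty B] (hH : IsRadiusOne H) :
    caEntropy (calG k H) ≤ Real.logb 2 (Nat.card B) := by
  rw [(isRadiusOne_calG k hH).caEntropy_eq_iSup]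
  have hB : 0 < Nat.card B := Nat.card_pos
  exact ciSup_le fun n => rowEntropy_le_logb _ (by positivity) hB
    (ncard_spaceTimePatterns_calG_le k hH n)

lemma pow_le_ncard_spaceTimePatterns_calF [Finite B] [DecidableEq B] {q : B} {e : ℕ → B}
    (he : ∀ s i, H^[s] e i ≠ q) (m : ℕ) :
    (2 ^ (2 * k)) ^ m ≤ (spaceTimePatterns (calF k H q) 1 (2 * m)).ncard := by
  let bits (D : Fin (2 * k) → Fin m → Bool) (j : Fin (2 * k)) (s : ℕ) : Bool :=
    if h : s < m then D j ⟨s, h⟩ else false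
  let config (D : Fin (2 * k) → Fin m → Bool) (l : ℕ) : (Fin (2 * k) → Fin 3) × B :=
    (fun j => zotEncode (bits D j) l, e l)
  let pattern (D : Fin (2 * k) → Fin m → Bool) (j : Fin 1) (i : Fin (2 * m)) :=
    (calF k H q)^[i] (config D) j
  have hinj : Function.Injective pattern := by
    intro D D' h
    funext j l
    have hcol : ∀ t < 2 * m,
        zot^[t] (zotEncode (bits D j)) 0 = zot^[t] (zotEncode (bits D' j)) 0 := by
      intro t ht
      have := congrArg (fun p => (p 0 ⟨t, ht⟩).1 j) h
      simpa [pattern, config, iterate_calF_of_forall_ne k he, iterate_zot2k_apply] using this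
    simpa [bits] using eq_of_iterate_zot_zotEncode_eq hcol l l.2
  calc (2 ^ (2 * k)) ^ m = Nat.card (Fin (2 * k) → Fin m → Bool) := by
        simp [← pow_mul, mul_comm]
    _ = (Set.univ : Set (Fin (2 * k) → Fin m → Bool)).ncard := (Set.ncard_univ _).symm
    _ ≤ _ := Set.ncard_le_ncard_of_injOn pattern
        (fun D _ => show pattern D ∈ spaceTimePatterns _ _ _ from ⟨config D, fun _ _ => rfl⟩)
        hinj.injOn

lemma le_caEntropy_calF [Finite B] [Nonempty B] [DecidableEq B] (hH : IsRadiusOne H) {q : B}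
    {e : ℕ → B} (he : ∀ s i, H^[s] e i ≠ q) : (k : ℝ) ≤ caEntropy (calF k H q) := by
  rw [(isRadiusOne_calF k hH q).caEntropy_eq_iSup]
  refine le_trans ?_ (le_ciSup (isRadiusOne_calF k hH q).bddAbove_range_rowEntropy 1)
  have := le_rowEntropy (calF k H q) two_pos (by positivity)
    (pow_le_ncard_spaceTimePatterns_calF k he)
  have hrate : Real.logb 2 ((2 ^ (2 * k) : ℕ) : ℝ) / (2 : ℕ) = k := by
    rw [Nat.cast_pow, Nat.cast_ofNat, Real.logb_pow, Real.logb_self_eq_one one_lt_two]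
    push_cast
    ring
  rwa [hrate] at this

end Construction

/-- With the construction as above (H a one-sided CA with radius-1 local rule `f` and
spreading quiescent state `q`, and `k > log₂|B|`): if `H` is not nilpotent, then
`h(𝓕) > h(𝓖)`. -/
theorem calF_entropy_gt_calG {B : Type*} [Fintype B] [DecidableEq B]
    (H : (ℕ → B) → (ℕ → B)) (f : B → B → B)
    (hf : ∀ c i, H c i = f (c i) (c (i + 1)))
    (q : B) (hq : ∀ a b : B, a = q ∨ b = q → f a b = q)
    (k : ℕ) (hk : Real.logb 2 (Fintype.card B) < (k : ℝ))
    (hnotnil : ¬ ∃ q' : B, (H (fun _ => q') = fun _ => q') ∧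
        ∀ c, ∃ n : ℕ, H^[n] c = fun _ => q') :
    caEntropy (calG k H) < caEntropy (calF k H q) := by
  have : Nonempty B := ⟨q⟩
  have hH := isRadiusOne_of_local hf
  obtain ⟨e, he⟩ := exists_forall_iterate_ne_of_not_nilpotent hf hq hnotnil
  calc caEntropy (calG k H) ≤ Real.logb 2 (Nat.card B) := caEntropy_calG_le k hH
    _ < k := by rwa [Nat.card_eq_fintype_card]
    _ ≤ caEntropy (calF k H q) := le_caEntropy_calF k hH he
end

section
/- With the construction as in the context: if H is nilpotent, then 𝓕 and 𝓖 are strongly conjugate — there exists a homeomorphism φ : (A×B)^ℕ → (A×B)^ℕ commuting with the shift such that φ ∘ 𝓕 = 𝓖 ∘ φ — and moreover h(𝓕) = h(𝓖) = 0. -/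
open Filter Topology

/-- The one-sided shift map on configurations `ℕ → C`. -/
def shiftN {C : Type*} (c : ℕ → C) : ℕ → C := fun i => c (i + 1)

/-! ### Auxiliary machinery -/

set_option linter.unusedSectionVars false

open Classical in
noncomputable def Zs (P : ℕ → Prop) (c : ℕ → Fin 3) : ℕ → Fin 3 :=
  fun m => if P m then rho (c (m+1)) (c m) else c m

lemma rho_inj : ∀ (a x y : Fin 3), rho a x = rho a y → x = y := by decide

lemma rho_surj : ∀ (a t : Fin 3), ∃ x, rho a x = t := by decide

lemma rho_key : ∀ a1 b1 a2 b2 a3 b3 : Fin 3, rho a2 a1 = rho b2 b1 → rho a3 a2 = rho b3 b2 →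
    a1 ≠ b1 → a2 ≠ b2 → a3 ≠ b3 → False := by decide

open Classical in
lemma Zs_apply (P : ℕ → Prop) (c : ℕ → Fin 3) (m : ℕ) :
    Zs P c m = if P m then rho (c (m+1)) (c m) else c m := rfl

lemma Zs_step_ne (P : ℕ → Prop) (c d : ℕ → Fin 3) (h : Zs P c = Zs P d) (m : ℕ)
    (hne : c m ≠ d m) : c (m+1) ≠ d (m+1) := by
  intro he
  have := congrFun h m
  rw [Zs_apply, Zs_apply] at this
  by_cases hP : P m
  · rw [if_pos hP, if_pos hP, he] at this
    exact hne (rho_inj _ _ _ this)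
  · rw [if_neg hP, if_neg hP] at this
    exact hne this

lemma Zs_inj (P : ℕ → Prop) : Function.Injective (Zs P) := by
  intro c d h
  funext m
  by_contra hne
  have h1 : c (m+1) ≠ d (m+1) := Zs_step_ne P c d h m hne
  have h2 : c (m+2) ≠ d (m+2) := Zs_step_ne P c d h (m+1) h1
  have e1 := congrFun h m
  have e2 := congrFun h (m+1)
  rw [Zs_apply, Zs_apply] at e1 e2
  by_cases hP1 : P m
  · by_cases hP2 : P (m+1)
    · rw [if_pos hP1, if_pos hP1] at e1
      rw [if_pos hP2, if_pos hP2] at e2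
      exact rho_key _ _ _ _ _ _ e1 e2 hne h1 h2
    · rw [if_neg hP2, if_neg hP2] at e2
      exact h1 e2
  · rw [if_neg hP1, if_neg hP1] at e1
    exact hne e1

lemma Zs_approx : ∀ (n : ℕ) (P : ℕ → Prop) (c' : ℕ → Fin 3),
    ∃ c, ∀ m < n, Zs P c m = c' m := by
  intro n
  induction n with
  | zero => exact fun P c' => ⟨c', by omega⟩
  | succ n ih =>
    intro P c'
    obtain ⟨d, hd⟩ := ih (fun m => P (m+1)) (fun m => c' (m+1))
    by_cases hP : P 0
    · obtain ⟨x0, hx0⟩ := rho_surj (d 0) (c' 0)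
      refine ⟨fun m => Nat.casesOn m x0 d, ?_⟩
      intro m hm
      cases m with
      | zero => rw [Zs_apply, if_pos hP]; exact hx0
      | succ m =>
        have := hd m (by omega)
        rw [Zs_apply] at this ⊢
        exact this
    · refine ⟨fun m => Nat.casesOn m (c' 0) d, ?_⟩
      intro m hm
      cases m with
      | zero => rw [Zs_apply, if_neg hP]; rfl
      | succ m =>
        have := hd m (by omega)
        rw [Zs_apply] at this ⊢
        exact this

lemma Zs_continuous (P : ℕ → Prop) : Continuous (Zs P) := by
  apply continuous_pi
  intro m
  by_cases hP : P m
  · have : (fun c : ℕ → Fin 3 => Zs P c m) =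
        (fun p : Fin 3 × Fin 3 => rho p.1 p.2) ∘ (fun c => (c (m+1), c m)) := by
      funext c; simp [Zs_apply, if_pos hP]
    rw [this]
    exact continuous_of_discreteTopology.comp ((continuous_apply (m+1)).prodMk (continuous_apply m))
  · have : (fun c : ℕ → Fin 3 => Zs P c m) = fun c => c m := by
      funext c; simp [Zs_apply, if_neg hP]
    rw [this]
    exact continuous_apply m

lemma Zs_surj (P : ℕ → Prop) : Function.Surjective (Zs P) := by
  intro c'
  have hclosed : IsClosed (Set.range (Zs P)) :=
    (isCompact_range (Zs_continuous P)).isClosed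
  have : c' ∈ closure (Set.range (Zs P)) := by
    have happrox := fun n => Zs_approx n P c'
    choose u hu using happrox
    have htend : Tendsto (fun n => Zs P (u n)) atTop (𝓝 c') := by
      rw [tendsto_pi_nhds]
      intro m
      apply Tendsto.congr' (f₁ := fun _ => c' m) _ tendsto_const_nhds
      filter_upwards [eventually_ge_atTop (m+1)] with n hn
      exact (hu n m (by omega)).symm
    exact mem_closure_of_tendsto htend (Eventually.of_forall (fun n => Set.mem_range_self _))
  rwa [hclosed.closure_eq] at this


lemma H_uniform_nil {B : Type*} [Fintype B] [DecidableEq B]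
    [TopologicalSpace B] [DiscreteTopology B]
    (H : (ℕ → B) → (ℕ → B)) (f : B → B → B)
    (hf : ∀ c i, H c i = f (c i) (c (i + 1)))
    (q : B) (hq : ∀ a b : B, a = q ∨ b = q → f a b = q)
    (hnil : ∃ q' : B, (H (fun _ => q') = fun _ => q') ∧
        ∀ c, ∃ n : ℕ, H^[n] c = fun _ => q') :
    ∃ N : ℕ, ∀ (e : ℕ → B) (m : ℕ), H^[N] e m = q := by
  obtain ⟨q', _hq'fix, hq'nil⟩ := hnil
  -- q is a fixed point
  have hqfix : H (fun _ => q) = fun _ => q := by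
    funext i; rw [hf]; exact hq _ _ (Or.inl rfl)
  -- q' = q
  have hq'q : q' = q := by
    obtain ⟨n, hn⟩ := hq'nil (fun _ => q)
    have : H^[n] (fun _ => q) = fun _ => q :=
      Function.iterate_fixed hqfix n
    rw [this] at hn
    exact (congrFun hn 0).symm
  rw [hq'q] at hq'nil
  -- continuity of H
  have Hcont : Continuous H := by
    have : H = fun c i => f (c i) (c (i+1)) := by
      funext c i; exact hf c i
    rw [this]
    apply continuous_pi
    intro i
    have h2 : Continuous (fun p : B × B => f p.1 p.2) := by
      exact continuous_of_discreteTopology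
    show Continuous fun c : ℕ → B => f (c i) (c (i+1))
    have h3 : (fun c : ℕ → B => f (c i) (c (i+1))) =
        (fun p : B × B => f p.1 p.2) ∘ (fun c : ℕ → B => (c i, c (i+1))) := rfl
    rw [h3]
    exact h2.comp ((continuous_apply i).prodMk (continuous_apply (i+1)))
  -- shift commutation
  have hshift : ∀ (n : ℕ) (c : ℕ → B) (j : ℕ),
      H^[n] c j = H^[n] (fun i => c (i + j)) 0 := by
    intro n
    induction n with
    | zero => intro c j; simp
    | succ n ih =>
      intro c j
      rw [Function.iterate_succ_apply, Function.iterate_succ_apply]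
      rw [ih (H c) j]
      have : (fun i => H c (i + j)) = H (fun i => c (i + j)) := by
        funext i; rw [hf, hf]
        have h3 : i + 1 + j = i + j + 1 := by omega
        rw [h3]
      rw [this]
  -- the uniform bound
  by_contra hcon
  push_neg at hcon
  set K : ℕ → Set (ℕ → B) := fun n => {c | H^[n] c 0 ≠ q} with hK
  have hKsub : ∀ n, K (n+1) ⊆ K n := by
    intro n c hc
    simp only [hK, Set.mem_setOf_eq] at hc ⊢
    intro h0
    apply hc
    rw [Function.iterate_succ_apply', hf, h0]
    exact hq _ _ (Or.inl rfl)
  have hKne : ∀ n, (K n).Nonempty := by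
    intro n
    obtain ⟨e, m, hem⟩ := hcon n
    refine ⟨fun i => e (i + m), ?_⟩
    simp only [hK, Set.mem_setOf_eq]
    rw [← hshift n e m]
    exact hem
  have hKcl : ∀ n, IsClosed (K n) := by
    intro n
    have : K n = ((fun c => H^[n] c 0) ⁻¹' {q}ᶜ) := rfl
    rw [this]
    apply IsClosed.preimage
    · exact (continuous_apply 0).comp (Hcont.iterate n)
    · exact isClosed_compl_iff.mpr (isOpen_discrete _)
  have hint : (⋂ n, K n).Nonempty :=
    IsCompact.nonempty_iInter_of_sequence_nonempty_isCompact_isClosed K hKsub hKne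
      (IsClosed.isCompact (hKcl 0)) hKcl
  obtain ⟨c, hc⟩ := hint
  obtain ⟨n, hn⟩ := hq'nil c
  have := Set.mem_iInter.mp hc n
  simp only [hK, Set.mem_setOf_eq] at this
  rw [hn] at this
  exact this rfl

lemma patterns_nonempty {C : Type*} [Nonempty C] (F : (ℕ → C) → (ℕ → C)) (n t : ℕ) :
    (spaceTimePatterns F n t).Nonempty := by
  classical
  exact ⟨fun j i => F^[(i:ℕ)] (fun _ => Classical.arbitrary C) (j:ℕ),
    ⟨fun _ => Classical.arbitrary C, fun j i => rfl⟩⟩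

lemma patterns_card_le {C : Type*} [Fintype C] [Nonempty C] [DecidableEq C]
    (F : (ℕ → C) → (ℕ → C)) (N : ℕ)
    (hF : ∀ (c : ℕ → C) (i : ℕ), N ≤ i → F^[i] c = F^[N] c) (n t : ℕ) :
    (spaceTimePatterns F n t).ncard ≤ Fintype.card C ^ ((N+1) * n) := by
  classical
  set ψ : (Fin n → Fin t → C) → (Fin n → Fin (N+1) → C) :=
    fun p j i => if h : (i:ℕ) < t then p j ⟨i, h⟩ else Classical.arbitrary C with hψdef
  have hinj : Set.InjOn ψ (spaceTimePatterns F n t) := by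
    rintro p ⟨c, hc⟩ p' ⟨c', hc'⟩ hψ
    funext j i
    by_cases hi : (i:ℕ) < N+1
    · have h1 := congrFun (congrFun hψ j) ⟨(i:ℕ), hi⟩
      simp only [hψdef, dif_pos i.2] at h1
      simpa using h1
    · have hNt : N < t := lt_of_le_of_lt (by omega) i.2
      have e1 : p j i = p j ⟨N, hNt⟩ := by
        rw [hc j i, hc j ⟨N, hNt⟩]
        show F^[(i:ℕ)] c (j:ℕ) = F^[N] c (j:ℕ)
        rw [hF c (i:ℕ) (by omega)]
      have e1' : p' j i = p' j ⟨N, hNt⟩ := by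
        rw [hc' j i, hc' j ⟨N, hNt⟩]
        show F^[(i:ℕ)] c' (j:ℕ) = F^[N] c' (j:ℕ)
        rw [hF c' (i:ℕ) (by omega)]
      have h2 := congrFun (congrFun hψ j) ⟨N, by omega⟩
      simp only [hψdef, dif_pos hNt] at h2
      rw [e1, e1', h2]
  calc (spaceTimePatterns F n t).ncard
      ≤ (Set.univ : Set (Fin n → Fin (N+1) → C)).ncard :=
        Set.ncard_le_ncard_of_injOn ψ (fun a _ => Set.mem_univ _) hinj Set.finite_univ
    _ = Fintype.card (Fin n → Fin (N+1) → C) := by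
        rw [Set.ncard_univ, Nat.card_eq_fintype_card]
    _ = Fintype.card C ^ ((N+1) * n) := by
        simp [Fintype.card_fun, ← pow_mul]

lemma entropy_zero_of_freeze {C : Type*} [Fintype C] [Nonempty C] [DecidableEq C]
    (F : (ℕ → C) → (ℕ → C)) (N : ℕ)
    (hF : ∀ (c : ℕ → C) (i : ℕ), N ≤ i → F^[i] c = F^[N] c) :
    caEntropy F = 0 := by
  have hinner : ∀ n : ℕ, Tendsto
      (fun t : ℕ => (1 / (t : ℝ)) * Real.logb 2 ((spaceTimePatterns F n t).ncard))
      atTop (𝓝 0) := by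
    intro n
    set D : ℝ := ((N+1) * n : ℕ) * Real.logb 2 (Fintype.card C) with hD
    have hcard1 : (1:ℝ) ≤ Fintype.card C := by
      exact_mod_cast Fintype.card_pos
    have hDnonneg : 0 ≤ D := by
      apply mul_nonneg (Nat.cast_nonneg _)
      exact Real.logb_nonneg one_lt_two hcard1
    have hge1 : ∀ t : ℕ, (1:ℝ) ≤ ((spaceTimePatterns F n t).ncard : ℝ) := by
      intro t
      have := Set.Nonempty.ncard_pos (Set.toFinite _) (patterns_nonempty F n t)
      exact_mod_cast this
    have hfle : ∀ t : ℕ, Real.logb 2 ((spaceTimePatterns F n t).ncard) ≤ D := by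
      intro t
      have h1 : ((spaceTimePatterns F n t).ncard : ℝ) ≤ (Fintype.card C : ℝ) ^ ((N+1)*n) := by
        rw [← Nat.cast_pow]
        exact_mod_cast patterns_card_le F N hF n t
      calc Real.logb 2 ((spaceTimePatterns F n t).ncard)
          ≤ Real.logb 2 ((Fintype.card C : ℝ) ^ ((N+1)*n)) :=
            Real.logb_le_logb_of_le one_lt_two (by linarith [hge1 t]) h1
        _ = D := by rw [Real.logb_pow, hD]
    apply squeeze_zero
    · intro t
      apply mul_nonneg
      · positivity
      · exact Real.logb_nonneg one_lt_two (hge1 t)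
    · intro t
      show (1 / (t : ℝ)) * Real.logb 2 ((spaceTimePatterns F n t).ncard) ≤ (1 / (t:ℝ)) * D
      apply mul_le_mul_of_nonneg_left (hfle t)
      positivity
    · have : Tendsto (fun t : ℕ => 1 / (t:ℝ)) atTop (𝓝 0) :=
        tendsto_one_div_atTop_nhds_zero_nat
      simpa using this.mul_const D
  have h1 : (fun n : ℕ => limUnder atTop
      (fun t : ℕ => (1 / (t : ℝ)) * Real.logb 2 ((spaceTimePatterns F n t).ncard)))
      = fun _ => (0:ℝ) := funext fun n => (hinner n).limUnder_eq
  rw [caEntropy, h1]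
  exact tendsto_const_nhds.limUnder_eq

section Dyn

variable {B : Type*} [DecidableEq B] (k : ℕ) (H : (ℕ → B) → (ℕ → B)) (q : B)

lemma calF_snd_iterate (n : ℕ) (x : ℕ → (Fin (2 * k) → Fin 3) × B) :
    (fun m => ((calF k H q)^[n] x m).2) = H^[n] (fun m => (x m).2) := by
  induction n with
  | zero => rfl
  | succ n ih =>
    rw [Function.iterate_succ_apply', Function.iterate_succ_apply', ← ih]
    rfl

lemma calG_snd_iterate (n : ℕ) (x : ℕ → (Fin (2 * k) → Fin 3) × B) :
    (fun m => ((calG k H)^[n] x m).2) = H^[n] (fun m => (x m).2) := by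
  induction n with
  | zero => rfl
  | succ n ih =>
    rw [Function.iterate_succ_apply', Function.iterate_succ_apply', ← ih]
    rfl

lemma calG_fst_iterate (n : ℕ) (x : ℕ → (Fin (2 * k) → Fin 3) × B) (m : ℕ) :
    ((calG k H)^[n] x m).1 = (x m).1 := by
  induction n with
  | zero => rfl
  | succ n ih => rw [Function.iterate_succ_apply', ← ih]; rfl

variable {N : ℕ} (hN : ∀ (e : ℕ → B) (m : ℕ), H^[N] e m = q)

include hN in
lemma H_iterate_q (e : ℕ → B) (i : ℕ) (hi : N ≤ i) (m : ℕ) : H^[i] e m = q := by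
  obtain ⟨j, rfl⟩ := Nat.exists_eq_add_of_le hi
  rw [Function.iterate_add_apply]
  exact hN _ m

include hN in
lemma calF_freeze (x : ℕ → (Fin (2 * k) → Fin 3) × B) (i : ℕ) (hi : N ≤ i) :
    (calF k H q)^[i] x = (calF k H q)^[N] x := by
  induction i, hi using Nat.le_induction with
  | base => rfl
  | succ i hi ih =>
    rw [← ih, Function.iterate_succ_apply']
    funext m
    have hb : (fun m' => ((calF k H q)^[i] x m').2) = H^[i] (fun m' => (x m').2) :=
      calF_snd_iterate k H q i x
    have h1 : H (fun m' => ((calF k H q)^[i] x m').2) m = q := by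
      rw [hb, ← Function.iterate_succ_apply' H i (fun m' => (x m').2)]
      exact H_iterate_q H q hN _ _ (by omega) m
    have h2 : ((calF k H q)^[i] x m).2 = q := by
      have := congrFun hb m
      rw [this]
      exact H_iterate_q H q hN _ _ hi m
    show (_, _) = _
    rw [if_pos h1]
    exact Prod.ext rfl (by rw [h1, h2])

include hN in
lemma calG_freeze (x : ℕ → (Fin (2 * k) → Fin 3) × B) (i : ℕ) (hi : N ≤ i) :
    (calG k H)^[i] x = (calG k H)^[N] x := by
  induction i, hi using Nat.le_induction with
  | base => rfl
  | succ i hi ih =>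
    rw [← ih, Function.iterate_succ_apply']
    funext m
    have hb : (fun m' => ((calG k H)^[i] x m').2) = H^[i] (fun m' => (x m').2) :=
      calG_snd_iterate k H i x
    have h1 : H (fun m' => ((calG k H)^[i] x m').2) m = q := by
      rw [hb, ← Function.iterate_succ_apply' H i (fun m' => (x m').2)]
      exact H_iterate_q H q hN _ _ (by omega) m
    have h2 : ((calG k H)^[i] x m).2 = q := by
      rw [congrFun hb m]
      exact H_iterate_q H q hN _ _ hi m
    show (_, _) = _
    exact Prod.ext rfl (by rw [h1, h2])

/-- The key recurrence: the A-track evolves by `Zs` coordinatewise. -/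
lemma calF_fst_succ (n : ℕ) (x : ℕ → (Fin (2 * k) → Fin 3) × B) (m : ℕ) (j : Fin (2 * k)) :
    ((calF k H q)^[n+1] x m).1 j =
      Zs (fun m' => ¬ (H^[n+1] (fun m'' => (x m'').2) m' = q))
        (fun m' => ((calF k H q)^[n] x m').1 j) m := by
  rw [Function.iterate_succ_apply']
  set y := (calF k H q)^[n] x with hy
  have hb : H (fun m' => (y m').2) m = H^[n+1] (fun m'' => (x m'').2) m := by
    rw [hy, calF_snd_iterate k H q n x,
      ← Function.iterate_succ_apply' H n (fun m'' => (x m'').2)]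
  show (if H (fun m' => (y m').2) m = q then (y m).1
      else zot2k k (fun m' => (y m').1) m) j = _
  rw [Zs_apply, hb]
  by_cases h : H^[n+1] (fun m'' => (x m'').2) m = q
  · rw [if_pos h, if_neg (not_not_intro h)]
  · rw [if_neg h, if_pos h]
    rfl


lemma calF_shiftN (f : B → B → B) (hf : ∀ c i, H c i = f (c i) (c (i + 1)))
    (x : ℕ → (Fin (2 * k) → Fin 3) × B) :
    calF k H q (shiftN x) = shiftN (calF k H q x) := by
  funext i
  have hcond : H (fun m => (shiftN x m).2) i = H (fun m => (x m).2) (i+1) := by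
    rw [hf, hf]; rfl
  refine Prod.ext ?_ hcond
  show (if H (fun m => (shiftN x m).2) i = q then (shiftN x i).1
      else zot2k k (fun m => (shiftN x m).1) i)
    = (if H (fun m => (x m).2) (i+1) = q then (x (i+1)).1
      else zot2k k (fun m => (x m).1) (i+1))
  rw [hcond]
  by_cases h : H (fun m => (x m).2) (i+1) = q
  · rw [if_pos h, if_pos h]; rfl
  · rw [if_neg h, if_neg h]; rfl

lemma calF_iter_shiftN (f : B → B → B) (hf : ∀ c i, H c i = f (c i) (c (i + 1)))
    (n : ℕ) (x : ℕ → (Fin (2 * k) → Fin 3) × B) :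
    (calF k H q)^[n] (shiftN x) = shiftN ((calF k H q)^[n] x) := by
  induction n with
  | zero => rfl
  | succ n ih =>
    rw [Function.iterate_succ_apply', Function.iterate_succ_apply', ih,
      calF_shiftN k H q f hf]

variable (N : ℕ)

/-- The conjugating map. -/
def Phi (x : ℕ → (Fin (2 * k) → Fin 3) × B) : ℕ → (Fin (2 * k) → Fin 3) × B :=
  fun i => (((calF k H q)^[N] x i).1, (x i).2)

lemma Phi_inj : Function.Injective (Phi k H q N) := by
  intro x y hxy
  have hsnd : ∀ m, (x m).2 = (y m).2 := by
    intro m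
    have h1 := congrFun hxy m
    have h2 : (Phi k H q N x m).2 = (Phi k H q N y m).2 := congrArg Prod.snd h1
    exact h2
  have hBt : (fun m => (x m).2) = (fun m => (y m).2) := funext hsnd
  have hfst : ∀ m j, ((calF k H q)^[N] x m).1 j = ((calF k H q)^[N] y m).1 j := by
    intro m j
    have h1 := congrFun hxy m
    have h2 : (Phi k H q N x m).1 = (Phi k H q N y m).1 := congrArg Prod.fst h1
    exact congrFun h2 j
  have key : ∀ n, (∀ m j, ((calF k H q)^[n] x m).1 j = ((calF k H q)^[n] y m).1 j) →
      ∀ m, (x m).1 = (y m).1 := by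
    intro n
    induction n with
    | zero => intro h m; funext j; exact h m j
    | succ n ih =>
      intro h
      apply ih
      intro m j
      have hZ : Zs (fun m' => ¬ (H^[n+1] (fun m'' => (x m'').2) m' = q))
            (fun m' => ((calF k H q)^[n] x m').1 j)
          = Zs (fun m' => ¬ (H^[n+1] (fun m'' => (x m'').2) m' = q))
            (fun m' => ((calF k H q)^[n] y m').1 j) := by
        funext m'
        have hy := calF_fst_succ k H q n y m' j
        rw [← hBt] at hy
        rw [← calF_fst_succ k H q n x m' j, ← hy]
        exact h m' j
      exact congrFun (Zs_inj _ hZ) m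
  funext m
  exact Prod.ext (key N hfst m) (hsnd m)

lemma Phi_surj_aux : ∀ (n : ℕ) (e : ℕ → B) (target : ℕ → Fin (2 * k) → Fin 3),
    ∃ c : ℕ → Fin (2 * k) → Fin 3, ∀ m, ((calF k H q)^[n] (fun i => (c i, e i)) m).1 = target m := by
  intro n
  induction n with
  | zero => exact fun e target => ⟨target, fun m => rfl⟩
  | succ n ih =>
    intro e target
    obtain ⟨c', hc'⟩ := ih (H e) target
    have hw : ∀ j : Fin (2 * k), ∃ w, Zs (fun m' => ¬ (H e m' = q)) w = fun m' => c' m' j :=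
      fun j => Zs_surj _ _
    choose w hwspec using hw
    set c : ℕ → Fin (2 * k) → Fin 3 := fun m j => w j m with hcdef
    have hstep : calF k H q (fun i => (c i, e i)) = (fun i => (c' i, H e i)) := by
      funext i
      refine Prod.ext ?_ rfl
      show (if H e i = q then c i else zot2k k c i) = c' i
      by_cases h : H e i = q
      · rw [if_pos h]
        funext j
        have h2 := congrFun (hwspec j) i
        rw [Zs_apply, if_neg (not_not_intro h)] at h2
        exact h2
      · rw [if_neg h]
        funext j
        have h2 := congrFun (hwspec j) i
        rw [Zs_apply, if_pos h] at h2
        exact h2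
    refine ⟨c, ?_⟩
    intro m
    rw [Function.iterate_succ_apply, hstep]
    exact hc' m

lemma Phi_surj : Function.Surjective (Phi k H q N) := by
  intro y
  obtain ⟨c, hc⟩ := Phi_surj_aux k H q N (fun m => (y m).2) (fun m => (y m).1)
  refine ⟨fun i => (c i, (y i).2), ?_⟩
  funext i
  exact Prod.ext (hc i) rfl

end Dyn

section Cont

variable {B : Type*} [DecidableEq B] [Fintype B] [TopologicalSpace B] [DiscreteTopology B]
  (k : ℕ) (H : (ℕ → B) → (ℕ → B)) (q : B)

lemma calF_continuous (f : B → B → B) (hf : ∀ c i, H c i = f (c i) (c (i + 1))) :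
    Continuous (calF k H q) := by
  have hrep : calF k H q = fun x i =>
      (fun p : ((Fin (2*k) → Fin 3) × B) × ((Fin (2*k) → Fin 3) × B) =>
        ((if f p.1.2 p.2.2 = q then p.1.1 else fun j => rho (p.2.1 j) (p.1.1 j)),
          f p.1.2 p.2.2)) (x i, x (i+1)) := by
    funext x i
    refine Prod.ext ?_ ?_
    · show (if H (fun m => (x m).2) i = q then (x i).1
          else zot2k k (fun m => (x m).1) i)
        = (if f ((x i).2) ((x (i+1)).2) = q then (x i).1
          else fun j => rho ((x (i+1)).1 j) ((x i).1 j))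
      rw [hf]
      rfl
    · show H (fun m => (x m).2) i = f ((x i).2) ((x (i+1)).2)
      rw [hf]
  rw [hrep]
  apply continuous_pi
  intro i
  have h2 : Continuous (fun p : ((Fin (2*k) → Fin 3) × B) × ((Fin (2*k) → Fin 3) × B) =>
      ((if f p.1.2 p.2.2 = q then p.1.1 else fun j => rho (p.2.1 j) (p.1.1 j)),
        f p.1.2 p.2.2)) := by
    exact continuous_of_discreteTopology
  exact h2.comp ((continuous_apply i).prodMk (continuous_apply (i+1)))

lemma Phi_continuous (N : ℕ) (f : B → B → B) (hf : ∀ c i, H c i = f (c i) (c (i + 1))) :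
    Continuous (Phi k H q N) := by
  have hFN : Continuous ((calF k H q)^[N]) := (calF_continuous k H q f hf).iterate N
  apply continuous_pi
  intro i
  have h1 : Continuous (fun x : ℕ → (Fin (2*k) → Fin 3) × B => ((calF k H q)^[N] x i).1) :=
    continuous_fst.comp ((continuous_apply i).comp hFN)
  have h2 : Continuous (fun x : ℕ → (Fin (2*k) → Fin 3) × B => (x i).2) :=
    continuous_snd.comp (continuous_apply i)
  exact h1.prodMk h2

end Cont

section Conj

variable {B : Type*} [DecidableEq B] (k : ℕ) (H : (ℕ → B) → (ℕ → B)) (q : B)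

lemma Phi_conj {N : ℕ} (hN : ∀ (e : ℕ → B) (m : ℕ), H^[N] e m = q)
    (x : ℕ → (Fin (2 * k) → Fin 3) × B) :
    Phi k H q N (calF k H q x) = calG k H (Phi k H q N x) := by
  funext i
  refine Prod.ext ?_ ?_
  · show ((calF k H q)^[N] (calF k H q x) i).1 = (Phi k H q N x i).1
    rw [← Function.iterate_succ_apply]
    rw [calF_freeze k H q hN x (N+1) (by omega)]
    rfl
  · rfl

lemma Phi_shift (N : ℕ) (f : B → B → B) (hf : ∀ c i, H c i = f (c i) (c (i + 1)))
    (x : ℕ → (Fin (2 * k) → Fin 3) × B) :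
    Phi k H q N (shiftN x) = shiftN (Phi k H q N x) := by
  funext i
  refine Prod.ext ?_ rfl
  show ((calF k H q)^[N] (shiftN x) i).1 = (((calF k H q)^[N] x) (i+1)).1
  rw [calF_iter_shiftN k H q f hf N x]
  rfl

end Conj


/-- With the construction as above (H a one-sided CA with radius-1 local rule `f` and
spreading quiescent state `q`, and `k > log₂|B|`): if `H` is nilpotent, then `𝓕` and `𝓖`
are strongly conjugate (via a shift-commuting homeomorphism `φ` with `φ ∘ 𝓕 = 𝓖 ∘ φ`)
and `h(𝓕) = h(𝓖) = 0`. -/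
theorem calF_strongConj_calG {B : Type*} [Fintype B] [DecidableEq B]
    [TopologicalSpace B] [DiscreteTopology B]
    (H : (ℕ → B) → (ℕ → B)) (f : B → B → B)
    (hf : ∀ c i, H c i = f (c i) (c (i + 1)))
    (q : B) (hq : ∀ a b : B, a = q ∨ b = q → f a b = q)
    (k : ℕ) (hk : Real.logb 2 (Fintype.card B) < (k : ℝ))
    (hnil : ∃ q' : B, (H (fun _ => q') = fun _ => q') ∧
        ∀ c, ∃ n : ℕ, H^[n] c = fun _ => q') :
    (∃ φ : (ℕ → (Fin (2 * k) → Fin 3) × B) ≃ₜ (ℕ → (Fin (2 * k) → Fin 3) × B),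
        (∀ x, φ (shiftN x) = shiftN (φ x)) ∧
        (∀ x, φ (calF k H q x) = calG k H (φ x))) ∧
      caEntropy (calF k H q) = 0 ∧ caEntropy (calG k H) = 0 := by
  haveI : Nonempty B := ⟨q⟩
  obtain ⟨N, hN⟩ := H_uniform_nil H f hf q hq hnil
  have hbij : Function.Bijective (Phi k H q N) := ⟨Phi_inj k H q N, Phi_surj k H q N⟩
  have hcont : Continuous (Phi k H q N) := Phi_continuous k H q N f hf
  have hcontE : Continuous (Equiv.ofBijective _ hbij) := hcont
  refine ⟨⟨hcontE.homeoOfEquivCompactToT2, ?_, ?_⟩, ?_, ?_⟩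
  · intro x
    show Phi k H q N (shiftN x) = shiftN (Phi k H q N x)
    exact Phi_shift k H q N f hf x
  · intro x
    show Phi k H q N (calF k H q x) = calG k H (Phi k H q N x)
    exact Phi_conj k H q hN x
  · exact entropy_zero_of_freeze (calF k H q) N (fun c i hi => calF_freeze k H q hN c i hi)
  · exact entropy_zero_of_freeze (calG k H) N (fun c i hi => calG_freeze k H q hN c i hi)
end
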